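/- If the length scales vanish (L = l = 0), the 1D microforce balance τ = τ^p − k^p_{,y} reduces to τ = S(|γ̇^p|/d_0)^{m-1}(γ̇^p/d_0); consequently, if τ(t) ≠ 0 at some time t during unloading, then γ̇^p(t) ≠ 0, i.e. plastic flow continues during unloading. -/
import Mathlib

/-- With `L = l = 0`, the microforce balance reads
`τ = S * (|γdotᵖ| / d₀) ^ (m - 1) * (γdotᵖ / d₀)`; hence a nonzero stress forces a
nonzero plastic strain rate: plastic flow continues during unloading. -/
theorem stmt_2 (S d0 m τ γp_dot : ℝ) (hS : 0 < S) (hd0 : 0 < d0)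
    (hm0 : 0 < m) (hm1 : m < 1)
    (hbal : τ = S * (|γp_dot| / d0) ^ (m - 1) * (γp_dot / d0))
    (hτ : τ ≠ 0) : γp_dot ≠ 0 := by
  intro h
  subst h
  simp at hbal
  exact hτ hbal
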